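/- arXiv:2003.13714 — 7 statements merged into one kernel-verified Lean document; each statement's English description precedes it below -/
import Mathlib

section
/- Let R be a principal ideal domain of prime characteristic p. If there exists a nonzero R-linear map Φ : F_{R*}R → R, then R is Frobenius split. -/
/-- A principal ideal domain of prime characteristic `p` admitting a nonzero
`p⁻¹`-linear map is Frobenius split. -/
theorem frobeniusSplit_of_pid_nonzero_pInvLinear {R : Type*} [CommRing R] [IsDomain R]
    [IsPrincipalIdealRing R] (p : ℕ) [Fact p.Prime] [CharP R p] (Φ : R →+ R)
    (hΦlin : ∀ r x : R, Φ (r ^ p * x) = r * Φ x)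
    (hΦne : Φ ≠ 0) :
    ∃ Ψ : R →+ R, (∀ r x : R, Ψ (r ^ p * x) = r * Ψ x) ∧ Ψ 1 = 1 := by
  classical
  -- The image of Φ is an ideal
  set I : Ideal R :=
    { carrier := Set.range Φ
      add_mem' := by rintro a b ⟨x, rfl⟩ ⟨y, rfl⟩; exact ⟨x + y, Φ.map_add x y⟩
      zero_mem' := ⟨0, Φ.map_zero⟩
      smul_mem' := by rintro r a ⟨x, rfl⟩; exact ⟨r ^ p * x, hΦlin r x⟩ } with hIdef
  obtain ⟨c, hc⟩ := IsPrincipalIdealRing.principal I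
  have hcI : c ∈ I := by rw [hc]; exact Ideal.mem_span_singleton_self c
  obtain ⟨x₀, hx₀⟩ := hcI
  have hc0 : c ≠ 0 := by
    rintro rfl
    apply hΦne
    ext x
    have hx : Φ x ∈ I := ⟨x, rfl⟩
    rw [hc] at hx
    simpa [Set.singleton_zero, Ideal.span_zero] using hx
  have key : ∀ y : R, ∃ z : R, z * c = Φ (x₀ * y) := by
    intro y
    have : Φ (x₀ * y) ∈ I := ⟨x₀ * y, rfl⟩
    rw [hc, Submodule.mem_span_singleton] at this
    simp only [smul_eq_mul] at this
    exact this
  choose g hg using key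
  have hcancel : ∀ a b : R, a * c = b * c → a = b := fun a b h =>
    mul_right_cancel₀ hc0 h
  refine ⟨{ toFun := g
            map_zero' := hcancel _ _ (by rw [hg, mul_zero, Φ.map_zero, zero_mul])
            map_add' := fun a b => hcancel _ _ (by
              rw [hg, mul_add, Φ.map_add, ← hg, ← hg, add_mul]) }, ?_, ?_⟩
  · intro r x
    apply hcancel
    show g (r ^ p * x) * c = r * g x * c
    rw [hg, show x₀ * (r ^ p * x) = r ^ p * (x₀ * x) by ring, hΦlin, ← hg, mul_assoc]
  · show g 1 = 1
    apply hcancel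
    rw [hg, mul_one, hx₀, one_mul]
end

section
/- Let k be a field of prime characteristic p, and suppose there exists a k-linear map φ : F_{k*}k → k with φ(1) = 1 (i.e., the Frobenius of k splits). Then the polynomial ring k[X₁,…,Xₙ] is Frobenius split, via the map sending Σ a_ν X^ν to Σ_{ν ∈ p·ℤ≥0ⁿ} φ(a_ν) X^{ν/p}. -/
/-!
`Ψ` keeps the coefficients at exponents divisible by `p` and applies `φ` to them. Since
`r ↦ r ^ p` is additive in characteristic `p`, both sides of `Ψ (r ^ p * x) = r * Ψ x` are
additive in `r`, so it suffices to take a monomial `r = c X^μ`; there the coefficients of `X^ν`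
on both sides are `φ (c ^ p * a) = c * φ a`, with `a` the coefficient of `X^(p • (ν - μ))` in `x`.
-/

theorem Finsupp.nsmul_tsub {σ : Type*} (p : ℕ) (μ ν : σ →₀ ℕ) : p • ν - p • μ = p • (ν - μ) := by
  ext
  simp [Nat.mul_sub]

namespace MvPolynomial

variable {σ R : Type*} [CommSemiring R] (p : ℕ) [NeZero p] (φ : R →+ R)

noncomputable def frobeniusSplitting : MvPolynomial σ R →+ MvPolynomial σ R :=
  AddMonoidAlgebra.coeffAddEquiv.symm.toAddMonoidHom.comp <|
    (Finsupp.mapRange.addMonoidHom φ).comp <|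
      (Finsupp.comapDomain.addMonoidHom (smul_right_injective (σ →₀ ℕ) (NeZero.ne p))).comp
        AddMonoidAlgebra.coeffAddEquiv.toAddMonoidHom

@[simp]
theorem coeff_frobeniusSplitting (f : MvPolynomial σ R) (ν : σ →₀ ℕ) :
    coeff ν (frobeniusSplitting p φ f) = φ (coeff (p • ν) f) :=
  rfl

variable {p φ}

theorem frobeniusSplitting_one (hφ1 : φ 1 = 1) : frobeniusSplitting p φ (1 : MvPolynomial σ R) = 1 := by
  classical
  ext ν
  rw [coeff_frobeniusSplitting, coeff_one, coeff_one]
  by_cases hν : ν = 0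
  · simp [hν, hφ1]
  · have hpν : p • ν ≠ 0 := by simpa [NeZero.ne p] using hν
    rw [if_neg (Ne.symm hpν), if_neg (Ne.symm hν), map_zero]

theorem frobeniusSplitting_monomial_pow_mul (hφlin : ∀ c x : R, φ (c ^ p * x) = c * φ x)
    (μ : σ →₀ ℕ) (c : R) (x : MvPolynomial σ R) :
    frobeniusSplitting p φ (monomial μ c ^ p * x) = monomial μ c * frobeniusSplitting p φ x := by
  ext ν
  rw [coeff_frobeniusSplitting, monomial_pow, coeff_monomial_mul', coeff_monomial_mul']
  simp only [smul_le_smul_iff_of_pos_left (Nat.pos_of_ne_zero (NeZero.ne p))]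
  split_ifs
  · rw [Finsupp.nsmul_tsub, hφlin, coeff_frobeniusSplitting]
  · exact map_zero φ

theorem frobeniusSplitting_pow_mul [ExpChar R p] (hφlin : ∀ c x : R, φ (c ^ p * x) = c * φ x)
    (r x : MvPolynomial σ R) :
    frobeniusSplitting p φ (r ^ p * x) = r * frobeniusSplitting p φ x := by
  induction r using induction_on' with
  | monomial μ c => exact frobeniusSplitting_monomial_pow_mul hφlin μ c x
  | add f g hf hg => rw [add_pow_expChar, add_mul, map_add, hf, hg, add_mul]

end MvPolynomial

open MvPolynomial in
/-- If the Frobenius of a field `k` of characteristic `p` splits via `φ`, then the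
polynomial ring `k[X₁,…,Xₙ]` is Frobenius split via the map sending `Σ a_ν X^ν` to
`Σ_{ν ∈ p·ℤ≥0ⁿ} φ(a_ν) X^(ν/p)` (whose coefficient at `ν` is `φ` of the coefficient
at `p • ν`). -/
theorem mvPolynomial_frobeniusSplit_of_field_split {k : Type*} [Field k] (p : ℕ)
    [Fact p.Prime] [CharP k p] (φ : k →+ k)
    (hφlin : ∀ c x : k, φ (c ^ p * x) = c * φ x) (hφ1 : φ 1 = 1) (n : ℕ) :
    ∃ Ψ : MvPolynomial (Fin n) k →+ MvPolynomial (Fin n) k,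
      (∀ r x : MvPolynomial (Fin n) k, Ψ (r ^ p * x) = r * Ψ x) ∧
      Ψ 1 = 1 ∧
      ∀ (f : MvPolynomial (Fin n) k) (ν : Fin n →₀ ℕ),
        MvPolynomial.coeff ν (Ψ f) = φ (MvPolynomial.coeff (p • ν) f) :=
  ⟨frobeniusSplitting p φ, frobeniusSplitting_pow_mul hφlin, frobeniusSplitting_one hφ1,
    coeff_frobeniusSplitting p φ⟩
end

section
/- Let K be a field and Γ ⊆ ℝ an additive subgroup. Then the Hahn series field K((t^Γ)) equipped with the Gauss norm ‖Σ a_γ t^γ‖ = max_{a_γ ≠ 0} e^{−γ} is spherically complete: every decreasing sequence of closed balls has nonempty intersection. -/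
/-!
A closed ball `{y | ‖y - c‖ ≤ r}` of `K((t^Γ))` consists exactly of the series agreeing with `c`
on the initial segment `{γ | r < e^{-γ}}` of exponents. For nested balls the centres are
therefore compatible on these segments, and gluing their coefficients gives a series lying in
every ball; its support is well-ordered because below any of its points it coincides with the
support of a single centre.
-/

open scoped Classical in
/-- The Gauss norm `‖Σ a_γ t^γ‖ = e^{-order}` on the Hahn series field `K((t^Γ))`. -/
noncomputable def hahnGaussNorm {K : Type*} [Field K] {Γ : AddSubgroup ℝ}
    (x : HahnSeries Γ K) : ℝ :=
  if x = 0 then 0 else Real.exp (-(x.order : ℝ))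

namespace HahnSeries

theorem exists_coeff_eq_on_lowerSets {Γ R ι : Type*} [LinearOrder Γ] [Zero R]
    (c : ι → HahnSeries Γ R) (S : ι → Set Γ) (hS : ∀ i, IsLowerSet (S i))
    (hc : ∀ i j, ∀ γ ∈ S i, γ ∈ S j → (c i).coeff γ = (c j).coeff γ) :
    ∃ x : HahnSeries Γ R, ∀ i, ∀ γ ∈ S i, x.coeff γ = (c i).coeff γ := by
  classical
  let f : Γ → R := fun γ => if h : ∃ i, γ ∈ S i then (c h.choose).coeff γ else 0
  have hf : ∀ i, ∀ γ ∈ S i, f γ = (c i).coeff γ := by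
    intro i γ hγ
    have h : ∃ i, γ ∈ S i := ⟨i, hγ⟩
    simp only [f, dif_pos h]
    exact hc _ _ γ h.choose_spec hγ
  have hsupp : (Function.support f).IsWF := by
    rw [Set.isWF_iff_no_descending_seq]
    intro g hg hgf
    obtain ⟨k, hk⟩ : ∃ k, g 0 ∈ S k := by
      by_contra h
      exact hgf 0 (dif_neg h)
    have hgS : ∀ n, g n ∈ S k := fun n => hS k (hg.antitone n.zero_le) hk
    exact (Set.isWF_iff_no_descending_seq.1 (c k).isWF_support) g hg
      fun n => by simpa [hf k _ (hgS n)] using hgf n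
  exact ⟨⟨f, hsupp.isPWO⟩, hf⟩

end HahnSeries

theorem hahnGaussNorm_le_iff {K : Type*} [Field K] {Γ : AddSubgroup ℝ} {x : HahnSeries Γ K}
    {r : ℝ} (hr : 0 ≤ r) :
    hahnGaussNorm x ≤ r ↔ ∀ γ : Γ, r < Real.exp (-(γ : ℝ)) → x.coeff γ = 0 := by
  unfold hahnGaussNorm
  split_ifs with hx
  · simp [hx, hr]
  constructor
  · intro h γ hγ
    apply HahnSeries.coeff_eq_zero_of_lt_order
    have : Real.exp (-(x.order : ℝ)) < Real.exp (-(γ : ℝ)) := h.trans_lt hγ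
    rw [Real.exp_lt_exp, neg_lt_neg_iff] at this
    exact_mod_cast this
  · intro h
    by_contra hlt
    exact hx (HahnSeries.coeff_order_eq_zero.1 (h _ (not_le.1 hlt)))

theorem hahnGaussNorm_sub_le_iff {K : Type*} [Field K] {Γ : AddSubgroup ℝ}
    {x y : HahnSeries Γ K} {r : ℝ} (hr : 0 ≤ r) :
    hahnGaussNorm (x - y) ≤ r ↔ ∀ γ : Γ, r < Real.exp (-(γ : ℝ)) → x.coeff γ = y.coeff γ := by
  simp only [hahnGaussNorm_le_iff hr, HahnSeries.coeff_sub, sub_eq_zero]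

/-- The Hahn series field `K((t^Γ))` with the Gauss norm is spherically complete:
every decreasing sequence of closed balls has nonempty intersection. -/
theorem hahnSeries_sphericallyComplete {K : Type*} [Field K] (Γ : AddSubgroup ℝ)
    (c : ℕ → HahnSeries Γ K) (r : ℕ → ℝ) (hr : ∀ n, 0 ≤ r n)
    (hdec : ∀ n, {y : HahnSeries Γ K | hahnGaussNorm (y - c (n + 1)) ≤ r (n + 1)} ⊆
      {y : HahnSeries Γ K | hahnGaussNorm (y - c n) ≤ r n}) :
    (⋂ n : ℕ, {y : HahnSeries Γ K | hahnGaussNorm (y - c n) ≤ r n}).Nonempty := by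
  have hanti : Antitone fun n => {y : HahnSeries Γ K | hahnGaussNorm (y - c n) ≤ r n} :=
    antitone_nat_of_succ_le hdec
  have hcentre : ∀ n, hahnGaussNorm (c n - c n) ≤ r n := fun n => by
    simpa [hahnGaussNorm] using hr n
  have hagree : ∀ {m n}, m ≤ n → ∀ γ : Γ, r m < Real.exp (-(γ : ℝ)) →
      (c n).coeff γ = (c m).coeff γ :=
    fun h => (hahnGaussNorm_sub_le_iff (hr _)).1 (hanti h (hcentre _))
  obtain ⟨x, hx⟩ := HahnSeries.exists_coeff_eq_on_lowerSets c
    (fun n => {γ : Γ | r n < Real.exp (-(γ : ℝ))})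
    (fun n _ _ hba hb => hb.trans_le (Real.exp_le_exp.2 (neg_le_neg (by exact_mod_cast hba))))
    (fun m n γ hm hn => (le_total m n).elim (fun h => (hagree h γ hm).symm) (hagree · γ hn))
  exact ⟨x, Set.mem_iInter.2 fun n => (hahnGaussNorm_sub_le_iff (hr n)).2 (hx n)⟩
end

section
/- Let Γ ⊆ ℝ be an additive subgroup with Γ/pΓ infinite (for a prime p). Then there exists a sequence (r_i)_{i∈ℕ} of elements of Γ, pairwise inequivalent modulo pΓ, with r_i ∈ (−1, 1) for all i. -/
/-!
If `Γ` were cyclic, `Γ/pΓ` would be a cyclic group killed by `p`, hence finite. So `Γ` is dense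
in `ℝ`, and so is its image `pΓ` under `x ↦ p x`; then every coset of `pΓ` in `Γ` meets
`(-1, 1)`, and representatives of infinitely many distinct cosets give the sequence.
-/

/-- The subgroup `pΓ = {p·γ : γ ∈ Γ}` of `ℝ`. -/
def pMulSubgroup (p : ℕ) (Γ : AddSubgroup ℝ) : AddSubgroup ℝ :=
  Γ.map (AddMonoidHom.mulLeft (p : ℝ))

theorem IsAddCyclic.finite_quotient_of_forall_nsmul_mem {G : Type*} [AddCommGroup G]
    [IsAddCyclic G] {n : ℕ} (hn : n ≠ 0) (H : AddSubgroup G) (hH : ∀ g : G, n • g ∈ H) :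
    Finite (G ⧸ H) := by
  have hexp : AddMonoid.exponent (G ⧸ H) ∣ n :=
    AddMonoid.exponent_dvd_of_forall_nsmul_eq_zero fun q => by
      induction q using QuotientAddGroup.induction_on with
      | H g => rw [← QuotientAddGroup.mk_nsmul, QuotientAddGroup.eq_zero_iff]; exact hH g
  have : IsAddCyclic (G ⧸ H) := isAddCyclic_of_surjective _ (QuotientAddGroup.mk'_surjective H)
  by_contra hfin
  have : Infinite (G ⧸ H) := not_finite_iff_infinite.mp hfin
  exact hn <| Nat.eq_zero_of_zero_dvd <|
    IsAddCyclic.exponent_eq_zero_of_infinite (α := G ⧸ H) ▸ hexp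

theorem AddSubgroup.exists_mem_open_mk_eq {G : Type*} [AddCommGroup G] [TopologicalSpace G]
    [IsTopologicalAddGroup G] {H K : AddSubgroup G} (hHK : H ≤ K) (hH : Dense (H : Set G))
    {U : Set G} (hU : IsOpen U) (hne : U.Nonempty) (q : K ⧸ H.addSubgroupOf K) :
    ∃ y : K, (y : G) ∈ U ∧ (y : K ⧸ H.addSubgroupOf K) = q := by
  obtain ⟨x, rfl⟩ := QuotientAddGroup.mk_surjective q
  obtain ⟨u, hu⟩ := hne
  obtain ⟨h, hh, hxh⟩ := hH.exists_mem_open (hU.preimage (continuous_sub_left (x : G)))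
    ⟨x - u, by simpa using hu⟩
  refine ⟨x - ⟨h, hHK hh⟩, by simpa using hxh, (QuotientAddGroup.eq ..).mpr ?_⟩
  simpa [AddSubgroup.mem_addSubgroupOf] using hh

theorem pMulSubgroup_le (p : ℕ) (Γ : AddSubgroup ℝ) : pMulSubgroup p Γ ≤ Γ := by
  rintro _ ⟨γ, hγ, rfl⟩
  simpa [nsmul_eq_mul] using Γ.nsmul_mem hγ p

theorem nsmul_mem_pMulSubgroup (p : ℕ) {Γ : AddSubgroup ℝ} {γ : ℝ} (hγ : γ ∈ Γ) :
    p • γ ∈ pMulSubgroup p Γ :=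
  ⟨γ, hγ, (nsmul_eq_mul p γ).symm⟩

theorem dense_of_infinite_quotient_pMulSubgroup {p : ℕ} (hp : p ≠ 0) {Γ : AddSubgroup ℝ}
    (hinf : Infinite (Γ ⧸ (pMulSubgroup p Γ).addSubgroupOf Γ)) : Dense (Γ : Set ℝ) := by
  refine Γ.dense_or_cyclic.resolve_right ?_
  rintro ⟨a, rfl⟩
  rw [← AddSubgroup.zmultiples_eq_closure] at hinf
  have hfin := IsAddCyclic.finite_quotient_of_forall_nsmul_mem hp
    ((pMulSubgroup p (.zmultiples a)).addSubgroupOf _) fun g => nsmul_mem_pMulSubgroup p g.2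
  exact not_finite_iff_infinite.mpr hinf hfin

theorem dense_pMulSubgroup {p : ℕ} (hp : p ≠ 0) {Γ : AddSubgroup ℝ}
    (hΓ : Dense (Γ : Set ℝ)) : Dense (pMulSubgroup p Γ : Set ℝ) := by
  rw [pMulSubgroup, AddSubgroup.coe_map]
  exact (mul_left_surjective₀ (Nat.cast_ne_zero.mpr hp)).denseRange.dense_image
    (continuous_const_mul _) hΓ

/-- If `Γ/pΓ` is infinite, there is a sequence of elements of `Γ` in `(-1, 1)` lying
in pairwise distinct cosets of `pΓ`. -/
theorem exists_bounded_coset_reps (p : ℕ) (hp : p.Prime) (Γ : AddSubgroup ℝ)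
    (hinf : Infinite (Γ ⧸ (pMulSubgroup p Γ).addSubgroupOf Γ)) :
    ∃ r : ℕ → Γ,
      (Function.Injective fun i =>
        (QuotientAddGroup.mk (r i) : Γ ⧸ (pMulSubgroup p Γ).addSubgroupOf Γ)) ∧
      ∀ i, (r i : ℝ) ∈ Set.Ioo (-1 : ℝ) 1 := by
  have hdense : Dense (pMulSubgroup p Γ : Set ℝ) :=
    dense_pMulSubgroup hp.ne_zero (dense_of_infinite_quotient_pMulSubgroup hp.ne_zero hinf)
  let e := Infinite.natEmbedding (Γ ⧸ (pMulSubgroup p Γ).addSubgroupOf Γ)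
  choose r hr hre using fun i => AddSubgroup.exists_mem_open_mk_eq (pMulSubgroup_le p Γ) hdense
    isOpen_Ioo (Set.nonempty_Ioo.mpr (by norm_num : (-1 : ℝ) < 1)) (e i)
  exact ⟨r, fun i j hij => e.injective (by simpa only [hre] using hij), hr⟩
end

section
/- Let (k, |·|) be a complete non-Archimedean field that is spherically complete, and let ℓ/k be an extension of non-Archimedean fields that is immediate (same value group and the induced residue field map is an isomorphism). Then ℓ = k. -/
/-!
If `y ∈ ℓ` were not in `k`, immediacy would let us improve any approximation `ι x` of `y`:
scaling `y - ι x` to norm one by an element of `k` of the same absolute value and subtracting a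
lift of its residue gives a strictly better approximation. On the other hand, in an ultrametric
space the balls `B(x, ‖y - ι x‖)` are nested along any sequence of improving approximations, so
spherical completeness of `k` provides a best approximation of `y`, a contradiction.
-/

def SphericallyComplete (X : Type*) [MetricSpace X] : Prop :=
  ∀ (c : ℕ → X) (r : ℕ → ℝ), (∀ n, 0 ≤ r n) →
    (∀ n, Metric.closedBall (c (n + 1)) (r (n + 1)) ⊆ Metric.closedBall (c n) (r n)) →
    (⋂ n : ℕ, Metric.closedBall (c n) (r n)).Nonempty

open Metric

section BestApproximation

variable {X Y : Type*} [MetricSpace X] [PseudoMetricSpace Y] [IsUltrametricDist Y]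
  {f : X → Y}

theorem Isometry.dist_le_of_mem_closedBall_dist (hf : Isometry f) (y : Y) {a x : X}
    (hx : x ∈ closedBall a (dist (f a) y)) : dist (f x) y ≤ dist (f a) y := by
  rw [mem_closedBall, ← hf.dist_eq] at hx
  exact (IsUltrametricDist.dist_triangle_max _ _ _).trans (max_le hx le_rfl)

theorem Isometry.closedBall_dist_subset_closedBall_dist (hf : Isometry f) (y : Y) {a b : X}
    (hab : dist (f a) y ≤ dist (f b) y) :
    closedBall a (dist (f a) y) ⊆ closedBall b (dist (f b) y) := by
  intro x hx
  rw [mem_closedBall, ← hf.dist_eq]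
  exact (IsUltrametricDist.dist_triangle_max _ y _).trans
    (max_le ((hf.dist_le_of_mem_closedBall_dist y hx).trans hab) (dist_comm y _).le)

theorem SphericallyComplete.exists_forall_dist_le_of_isometry [Nonempty X]
    (hX : SphericallyComplete X) (hf : Isometry f) (y : Y) :
    ∃ x, ∀ x', dist (f x) y ≤ dist (f x') y := by
  set S := Set.range fun x => dist (f x) y
  have hS_bdd : BddBelow S := ⟨0, by rintro _ ⟨x, rfl⟩; exact dist_nonneg⟩
  obtain ⟨u, hu_anti, hu_lim, hu_mem⟩ := exists_seq_tendsto_sInf (Set.range_nonempty _) hS_bdd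
  choose c hc using hu_mem
  obtain rfl : u = fun n => dist (f (c n)) y := funext fun n => (hc n).symm
  have hnest : ∀ n, closedBall (c (n + 1)) (dist (f (c (n + 1))) y) ⊆
      closedBall (c n) (dist (f (c n)) y) := fun n =>
    hf.closedBall_dist_subset_closedBall_dist y (hu_anti n.le_succ)
  obtain ⟨x, hx⟩ := hX c (fun n => dist (f (c n)) y) (fun n => dist_nonneg) hnest
  rw [Set.mem_iInter] at hx
  have hx_le : ∀ n, dist (f x) y ≤ dist (f (c n)) y := fun n =>
    hf.dist_le_of_mem_closedBall_dist y (hx n)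
  exact ⟨x, fun x' => (ge_of_tendsto' hu_lim hx_le).trans (csInf_le hS_bdd ⟨x', rfl⟩)⟩

end BestApproximation

theorem exists_norm_sub_map_lt_norm {k ℓ : Type*} [Semiring k] [NormedField ℓ] (ι : k →+* ℓ)
    (hval : ∀ y : ℓ, y ≠ 0 → ∃ x : k, ‖ι x‖ = ‖y‖)
    (hres : ∀ y : ℓ, ‖y‖ ≤ 1 → ∃ x : k, ‖y - ι x‖ < 1) {z : ℓ} (hz : z ≠ 0) :
    ∃ t : k, ‖z - ι t‖ < ‖z‖ := by
  obtain ⟨s, hs⟩ := hval z hz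
  have hs_pos : 0 < ‖ι s‖ := hs ▸ norm_pos_iff.mpr hz
  have hs_ne : ι s ≠ 0 := norm_pos_iff.mp hs_pos
  obtain ⟨t, ht⟩ := hres (z / ι s) (by rw [norm_div, hs]; exact div_self_le_one _)
  refine ⟨s * t, ?_⟩
  calc ‖z - ι (s * t)‖ = ‖ι s‖ * ‖z / ι s - ι t‖ := by
        rw [← norm_mul, mul_sub, mul_div_cancel₀ _ hs_ne, map_mul]
    _ < ‖ι s‖ * 1 := mul_lt_mul_of_pos_left ht hs_pos
    _ = ‖z‖ := by rw [mul_one, hs]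

theorem immediate_extension_of_sphericallyComplete_is_trivial_general
    {k ℓ : Type*} [NontriviallyNormedField k] [NontriviallyNormedField ℓ]
    [IsUltrametricDist ℓ]
    (ι : k →+* ℓ) (hisom : ∀ x : k, ‖ι x‖ = ‖x‖)
    (hsph : SphericallyComplete k)
    (hval : ∀ y : ℓ, y ≠ 0 → ∃ x : k, x ≠ 0 ∧ ‖ι x‖ = ‖y‖)
    (hres : ∀ y : ℓ, ‖y‖ ≤ 1 → ∃ x : k, ‖x‖ ≤ 1 ∧ ‖y - ι x‖ < 1) :
    Function.Surjective ι := by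
  intro y
  by_contra hy
  push Not at hy
  have hι : Isometry ι := (AddMonoidHomClass.isometry_iff_norm ι).mpr hisom
  obtain ⟨x, hx⟩ := hsph.exists_forall_dist_le_of_isometry hι y
  have hz : y - ι x ≠ 0 := sub_ne_zero.mpr fun h => hy x h.symm
  obtain ⟨t, ht⟩ := exists_norm_sub_map_lt_norm ι (fun z h => (hval z h).imp fun _ => And.right)
    (fun z h => (hres z h).imp fun _ => And.right) hz
  have hbetter : dist (ι (x + t)) y < dist (ι x) y := by
    rwa [dist_comm, dist_comm (ι x), dist_eq_norm, dist_eq_norm, map_add, ← sub_sub]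
  exact (hx (x + t)).not_gt hbetter

/-- A spherically complete non-Archimedean field admits no proper immediate extension:
if `ι : k → ℓ` is an isometric extension of non-Archimedean fields with the same value
group and surjective residue map, and `k` is spherically complete, then `ι` is
surjective, i.e. `ℓ = k`. -/
theorem immediate_extension_of_sphericallyComplete_is_trivial
    {k ℓ : Type*} [NontriviallyNormedField k] [NontriviallyNormedField ℓ]
    [IsUltrametricDist k] [IsUltrametricDist ℓ] [CompleteSpace k] [CompleteSpace ℓ]
    (ι : k →+* ℓ) (hisom : ∀ x : k, ‖ι x‖ = ‖x‖)
    (hsph : SphericallyComplete k)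
    (hval : ∀ y : ℓ, y ≠ 0 → ∃ x : k, x ≠ 0 ∧ ‖ι x‖ = ‖y‖)
    (hres : ∀ y : ℓ, ‖y‖ ≤ 1 → ∃ x : k, ‖x‖ ≤ 1 ∧ ‖y - ι x‖ < 1) :
    Function.Surjective ι :=
  immediate_extension_of_sphericallyComplete_is_trivial_general ι hisom hsph hval hres
end

section
/- Let (k, |·|_k) ⊆ (ℓ, |·|_ℓ) be an extension of non-Archimedean fields with ℓ spherically complete and k not spherically complete. Then every continuous k-linear map f : ℓ → k is zero. -/
/-- If `ℓ/k` is an extension of non-Archimedean fields with `ℓ` spherically complete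
but `k` not spherically complete, then every continuous `k`-linear map `ℓ → k` is
zero. -/
theorem continuous_linear_functional_eq_zero
    {k ℓ : Type*} [NontriviallyNormedField k] [NontriviallyNormedField ℓ]
    [IsUltrametricDist k] [IsUltrametricDist ℓ] [CompleteSpace k] [CompleteSpace ℓ]
    (ι : k →+* ℓ) (hisom : ∀ x : k, ‖ι x‖ = ‖x‖)
    (hℓ : SphericallyComplete ℓ) (hk : ¬ SphericallyComplete k)
    (f : ℓ → k)
    (hadd : ∀ a b : ℓ, f (a + b) = f a + f b)
    (hlin : ∀ (c : k) (y : ℓ), f (ι c * y) = c * f y)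
    (hcont : Continuous f) :
    ∀ y : ℓ, f y = 0 := by
  by_contra hcon
  push_neg at hcon
  obtain ⟨y₀, hy₀⟩ := hcon
  -- basic algebra of f
  have hf0 : f 0 = 0 := by
    have h := hadd 0 0
    rw [add_zero] at h
    exact (left_eq_add.mp h)
  have hfsub : ∀ a b : ℓ, f (a - b) = f a - f b := by
    intro a b
    have h1 : f (a - b) + f b = f a := by rw [← hadd]; ring_nf
    linear_combination h1
  -- the normalized preimage of 1
  set e : ℓ := ι (f y₀)⁻¹ * y₀ with he
  have hfe : f e = 1 := by
    rw [he, hlin, inv_mul_cancel₀ hy₀]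
  -- kernel
  set D : Set ℓ := f ⁻¹' {0} with hD
  have hDclosed : IsClosed D := isClosed_singleton.preimage hcont
  have hD0 : (0 : ℓ) ∈ D := by simp [hD, hf0]
  have heD : e ∉ D := by simp [hD, hfe]
  set t : ℝ := Metric.infDist e D with ht
  have htpos : 0 < t := (hDclosed.notMem_iff_infDist_pos ⟨0, hD0⟩).mp heD
  -- lower bound : t * ‖f w‖ ≤ ‖w‖
  have hbound : ∀ w : ℓ, t * ‖f w‖ ≤ ‖w‖ := by
    intro w
    rcases eq_or_ne (f w) 0 with h0 | h0
    · simp [h0, norm_nonneg]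
    · have hz : e - ι (f w)⁻¹ * w ∈ D := by
        simp only [hD, Set.mem_preimage, Set.mem_singleton_iff]
        rw [hfsub, hfe, hlin, inv_mul_cancel₀ h0, sub_self]
      have h1 : t ≤ dist e (e - ι (f w)⁻¹ * w) := Metric.infDist_le_dist_of_mem hz
      have h2 : dist e (e - ι (f w)⁻¹ * w) = ‖f w‖⁻¹ * ‖w‖ := by
        rw [dist_eq_norm]
        simp only [sub_sub_cancel]
        rw [norm_mul, hisom, norm_inv]
      rw [h2] at h1
      have hfw : 0 < ‖f w‖ := norm_pos_iff.mpr h0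
      calc t * ‖f w‖ ≤ (‖f w‖⁻¹ * ‖w‖) * ‖f w‖ := by
            exact mul_le_mul_of_nonneg_right h1 (norm_nonneg _)
        _ = ‖w‖ := by field_simp
  -- approximate preimages
  have happrox : ∀ (c' : k) (s : ℝ), t * ‖c'‖ < s → ∃ z : ℓ, f z = c' ∧ ‖z‖ ≤ s := by
    intro c' s hs
    rcases eq_or_ne c' 0 with rfl | hc
    · refine ⟨0, hf0, ?_⟩
      simp only [norm_zero]
      nlinarith [norm_nonneg (0 : k), htpos.le]
    · have hcpos : 0 < ‖c'‖ := norm_pos_iff.mpr hc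
      have h1 : t < s / ‖c'‖ := by
        rw [lt_div_iff₀ hcpos]; linarith [hs]
      obtain ⟨u, huD, hu⟩ := (Metric.infDist_lt_iff ⟨0, hD0⟩).mp (lt_of_le_of_lt le_rfl h1 : Metric.infDist e D < s / ‖c'‖)
      refine ⟨ι c' * (e - u), ?_, ?_⟩
      · rw [hlin, hfsub, hfe]
        have : f u = 0 := huD
        rw [this, sub_zero, mul_one]
      · rw [norm_mul, hisom]
        have : ‖e - u‖ < s / ‖c'‖ := by rwa [dist_eq_norm] at hu
        calc ‖c'‖ * ‖e - u‖ ≤ ‖c'‖ * (s / ‖c'‖) :=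
              mul_le_mul_of_nonneg_left this.le (norm_nonneg _)
          _ = s := by field_simp
  -- unpack failure of spherical completeness of k
  rw [SphericallyComplete] at hk
  push_neg at hk
  obtain ⟨c, r, hr0, hnest, hempty⟩ := hk
  -- running minimum of radii
  set ρ : ℕ → ℝ := fun n => Nat.rec (r 0) (fun m ih => min ih (r (m + 1))) n with hρ
  have hρ0 : ρ 0 = r 0 := rfl
  have hρsucc : ∀ n, ρ (n + 1) = min (ρ n) (r (n + 1)) := fun n => rfl
  have hρanti : Antitone ρ := by
    apply antitone_nat_of_succ_le
    intro n; rw [hρsucc]; exact min_le_left _ _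
  have hρnonneg : ∀ n, 0 ≤ ρ n := by
    intro n; induction n with
    | zero => rw [hρ0]; exact hr0 0
    | succ m ih => rw [hρsucc]; exact le_min ih (hr0 _)
  have hρle : ∀ n m, m ≤ n → ρ n ≤ r m := by
    intro n
    induction n with
    | zero => intro m hm; interval_cases m; rw [hρ0]
    | succ p ih =>
      intro m hm
      rcases Nat.lt_succ_iff_lt_or_eq.mp (Nat.lt_succ_of_le hm) with h | h
      · exact le_trans (by rw [hρsucc]; exact min_le_left _ _) (ih m (Nat.lt_succ_iff.mp h))
      · rw [h, hρsucc]; exact min_le_right _ _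
  have hρge : ∀ n (x : ℝ), (∀ m ≤ n, x ≤ r m) → x ≤ ρ n := by
    intro n
    induction n with
    | zero => intro x hx; rw [hρ0]; exact hx 0 le_rfl
    | succ p ih =>
      intro x hx
      rw [hρsucc]
      exact le_min (ih x fun m hm => hx m (hm.trans (Nat.le_succ p))) (hx (p + 1) le_rfl)
  -- distances between centers
  have hsub : ∀ n m, n ≤ m → Metric.closedBall (c m) (r m) ⊆ Metric.closedBall (c n) (r n) := by
    intro n m hnm
    induction m with
    | zero => interval_cases n; exact subset_rfl
    | succ p ih =>
      rcases Nat.lt_succ_iff_lt_or_eq.mp (Nat.lt_succ_of_le hnm) with h | h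
      · exact (hnest p).trans (ih (Nat.lt_succ_iff.mp h))
      · rw [h]
  have hcc : ∀ n m, n ≤ m → dist (c m) (c n) ≤ r n := by
    intro n m hnm
    have : c m ∈ Metric.closedBall (c n) (r n) :=
      hsub n m hnm (Metric.mem_closedBall_self (hr0 m))
    rwa [Metric.mem_closedBall] at this
  have hccρ : ∀ n m m', n ≤ m → n ≤ m' → dist (c m) (c m') ≤ ρ n := by
    intro n m m' hm hm'
    apply hρge
    intro j hj
    calc dist (c m) (c m') ≤ max (dist (c m) (c j)) (dist (c j) (c m')) :=
          IsUltrametricDist.dist_triangle_max _ _ _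
      _ ≤ r j := by
          rw [dist_comm (c j) (c m')]
          exact max_le (hcc j m (hj.trans hm)) (hcc j m' (hj.trans hm'))
  -- ρ is not eventually constant
  have hstrict : ∀ N, ∃ m, N < m ∧ ρ m < ρ N := by
    intro N
    by_contra hcon2
    push_neg at hcon2
    have heq : ∀ m, N < m → ρ m = ρ N := fun m hm =>
      le_antisymm (hρanti hm.le) (hcon2 m hm)
    have : c N ∈ ⋂ n, Metric.closedBall (c n) (r n) := by
      apply Set.mem_iInter.mpr
      intro n
      rw [Metric.mem_closedBall]
      rcases le_or_gt n N with h | h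
      · exact hcc n N h
      · calc dist (c N) (c n) ≤ ρ N := hccρ N N n le_rfl h.le
          _ = ρ n := (heq n h).symm
          _ ≤ r n := hρle n n le_rfl
    rw [hempty] at this
    exact this
  choose g hg1 hg2 using hstrict
  -- subsequence along which ρ strictly decreases
  set nseq : ℕ → ℕ := fun j => Nat.rec 0 (fun _ ih => g ih) j with hnseq
  have hnseq0 : nseq 0 = 0 := rfl
  have hnseqsucc : ∀ j, nseq (j + 1) = g (nseq j) := fun j => rfl
  have hnseqmono : StrictMono nseq := by
    apply strictMono_nat_of_lt_succ
    intro j; rw [hnseqsucc]; exact hg1 _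
  have hnseqge : ∀ j, j ≤ nseq j := fun j => hnseqmono.le_apply
  have hρstrict : ∀ j, ρ (nseq (j + 1)) < ρ (nseq j) := by
    intro j; rw [hnseqsucc]; exact hg2 _
  -- the k-side sequence
  set a : ℕ → k := fun j => c (nseq j) with ha
  set Q : ℕ → ℝ := fun j => Nat.rec (ρ 0 + 1) (fun m _ => ρ (nseq m)) j with hQ
  have hQ0 : Q 0 = ρ 0 + 1 := rfl
  have hQsucc : ∀ j, Q (j + 1) = ρ (nseq j) := fun j => rfl
  have hQnonneg : ∀ j, 0 ≤ Q j := by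
    intro j
    cases j with
    | zero => rw [hQ0]; linarith [hρnonneg 0]
    | succ m => rw [hQsucc]; exact hρnonneg _
  have hQanti : ∀ j, Q (j + 1) ≤ Q j := by
    intro j
    cases j with
    | zero =>
      rw [hQ0, hQsucc, hnseq0]
      linarith
    | succ m =>
      exact le_trans (le_of_eq (hQsucc (m + 1))) (le_trans (hρstrict m).le (le_of_eq (hQsucc m).symm))
  have hkey : ∀ j, t * ‖a (j + 1) - a j‖ < t * Q j := by
    intro j
    have h1 : ‖a (j + 1) - a j‖ ≤ ρ (nseq j) := by
      rw [← dist_eq_norm]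
      exact hccρ (nseq j) (nseq (j + 1)) (nseq j) (hnseqmono (Nat.lt_succ_self j)).le le_rfl
    have h2 : ρ (nseq j) < Q j := by
      cases j with
      | zero => rw [hQ0, hnseq0]; linarith
      | succ m => rw [hQsucc]; exact hρstrict m
    exact mul_lt_mul_of_pos_left (lt_of_le_of_lt h1 h2) htpos
  -- construct the ℓ-side centers
  choose F hF1 hF2 using happrox
  have hd : ∃ d : ℕ → ℓ, (∀ j, f (d j) = a j) ∧ ∀ j, ‖d (j + 1) - d j‖ ≤ t * Q j := by
    have pf0 : t * ‖a 0‖ < t * ‖a 0‖ + 1 := by linarith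
    refine ⟨fun j => Nat.rec (F (a 0) (t * ‖a 0‖ + 1) pf0)
      (fun j ih => ih + F (a (j + 1) - a j) (t * Q j) (hkey j)) j, ?_, ?_⟩
    · intro j
      induction j with
      | zero => exact hF1 _ _ _
      | succ m ih =>
        show f (_ + F (a (m + 1) - a m) (t * Q m) (hkey m)) = a (m + 1)
        rw [hadd, ih, hF1]
        ring
    · intro j
      show ‖_ + F (a (j + 1) - a j) (t * Q j) (hkey j) - _‖ ≤ t * Q j
      rw [add_sub_cancel_left]
      exact hF2 _ _ _
  obtain ⟨d, hd1, hd2⟩ := hd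
  -- apply spherical completeness of ℓ
  have hmain := hℓ d (fun j => t * Q j)
    (fun j => mul_nonneg htpos.le (hQnonneg j))
    (by
      intro j
      intro x hx
      rw [Metric.mem_closedBall] at hx ⊢
      calc dist x (d j) ≤ max (dist x (d (j + 1))) (dist (d (j + 1)) (d j)) :=
            IsUltrametricDist.dist_triangle_max _ _ _
        _ ≤ t * Q j := by
            apply max_le
            · exact hx.trans (mul_le_mul_of_nonneg_left (hQanti j) htpos.le)
            · rw [dist_eq_norm]; exact hd2 j)
  obtain ⟨z, hz⟩ := hmain
  rw [Set.mem_iInter] at hz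
  -- f z is in every ball B(c n, r n), contradiction
  have hfz : ∀ j, dist (f z) (a j) ≤ Q j := by
    intro j
    have h1 : ‖z - d j‖ ≤ t * Q j := by
      have := hz j
      rwa [Metric.mem_closedBall, dist_eq_norm] at this
    have h2 : t * ‖f (z - d j)‖ ≤ t * Q j := (hbound _).trans h1
    have h3 : ‖f (z - d j)‖ ≤ Q j := le_of_mul_le_mul_left h2 htpos
    rwa [hfsub, hd1, ← dist_eq_norm] at h3
  have : f z ∈ ⋂ n, Metric.closedBall (c n) (r n) := by
    apply Set.mem_iInter.mpr
    intro n
    rw [Metric.mem_closedBall]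
    have h1 : dist (f z) (a (n + 1)) ≤ Q (n + 1) := hfz (n + 1)
    have h2 : Q (n + 1) ≤ r n := by
      rw [hQsucc]
      exact hρle (nseq n) n (hnseqge n)
    have h3 : dist (a (n + 1)) (c n) ≤ r n := by
      rw [ha]
      exact hcc n (nseq (n + 1)) ((Nat.le_succ n).trans (hnseqge (n + 1)))
    calc dist (f z) (c n) ≤ max (dist (f z) (a (n + 1))) (dist (a (n + 1)) (c n)) :=
          IsUltrametricDist.dist_triangle_max _ _ _
      _ ≤ r n := max_le (h1.trans h2) h3
  rw [hempty] at this
  exact this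
end

section
/- Let (k, |·|) be a complete non-Archimedean field of characteristic p > 0 with no nonzero continuous k-linear functionals k^{1/p} → k. Then the valuation ring k° admits no nonzero k°-linear maps F_{k°*}k° → k°. -/
/-!
Given a `p⁻¹`-linear `g : k° → k°`, extend it to `G : k → k` by `G a = c⁻¹ g(c ^ p a)` for any
nonzero `c ∈ k°` with `c ^ p a ∈ k°`; this is well defined and `p⁻¹`-linear over all of `k`.
Composing with the Frobenius isomorphism `φ : k^{1/p} → k` gives a `k`-linear functional
`G ∘ φ` that maps the unit ball into the unit ball, hence is continuous, hence vanishes; since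
`φ` is onto, `g = 0`.
-/

def unitBallSubring (k : Type*) [NormedField k] [IsUltrametricDist k] : Subring k where
  carrier := {x : k | ‖x‖ ≤ 1}
  zero_mem' := by simp
  one_mem' := by simp
  add_mem' := fun {a b} ha hb => le_trans (IsUltrametricDist.norm_add_le_max a b)
    (max_le ha hb)
  neg_mem' := fun {a} ha => by simpa using ha
  mul_mem' := fun {a b} ha hb => by
    calc ‖a * b‖ = ‖a‖ * ‖b‖ := norm_mul a b
    _ ≤ 1 := mul_le_one₀ ha (norm_nonneg b) hb

section FrobeniusFactor

variable {k K : Type*} [Field k] [CommRing K] [Nontrivial K] {ι : k →+* K} {p : ℕ} {φ : K → k}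

/-- For `K = k^{1/p}`, such a `φ` is the Frobenius isomorphism `k^{1/p} ≅ k`, `y ↦ y ^ p`. -/
def IsFrobeniusFactor (ι : k →+* K) (p : ℕ) (φ : K → k) : Prop :=
  ∀ y, ι (φ y) = y ^ p

namespace IsFrobeniusFactor

theorem map_add [Fact p.Prime] [CharP K p] (hφ : IsFrobeniusFactor ι p φ) (a b : K) :
    φ (a + b) = φ a + φ b :=
  ι.injective <| by rw [_root_.map_add, hφ, hφ, hφ, add_pow_char]

theorem map_mul (hφ : IsFrobeniusFactor ι p φ) (c : k) (y : K) :
    φ (ι c * y) = c ^ p * φ y :=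
  ι.injective <| by rw [_root_.map_mul, map_pow, hφ, hφ, mul_pow]

theorem apply_eq_of_pow_eq (hφ : IsFrobeniusFactor ι p φ) {x : k} {y : K} (h : y ^ p = ι x) :
    φ y = x :=
  ι.injective <| by rw [hφ, h]

end IsFrobeniusFactor

theorem IsFrobeniusFactor.norm_eq {k K : Type*} [NormedField k] [NormedField K] {ι : k →+* K}
    {p : ℕ} {φ : K → k} (hφ : IsFrobeniusFactor ι p φ) (hι : ∀ x, ‖ι x‖ = ‖x‖) (y : K) :
    ‖φ y‖ = ‖y‖ ^ p := by
  rw [← hι, hφ, norm_pow]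

end FrobeniusFactor

theorem continuous_of_map_mul_of_norm_le_one {k K : Type*} [NontriviallyNormedField k]
    [NormedCommRing K] (ι : k →+* K) (hι : ∀ x, ‖ι x‖ = ‖x‖) {f : K → k}
    (hadd : ∀ a b, f (a + b) = f a + f b) (hmul : ∀ c y, f (ι c * y) = c * f y)
    (hf : ∀ y, ‖y‖ ≤ 1 → ‖f y‖ ≤ 1) : Continuous f := by
  let := ι.toAlgebra
  let : NormedSpace k K :=
    ⟨fun c y => by rw [Algebra.smul_def, ← hι c]; exact norm_mul_le _ _⟩
  let F : K →ₗ[k] k := ⟨⟨f, hadd⟩, hmul⟩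
  obtain ⟨C, hC⟩ := F.bound_of_ball_bound one_pos 1 fun y hy =>
    hf y (mem_ball_zero_iff.1 hy).le
  exact AddMonoidHomClass.continuous_of_bound F C hC

section Extension

variable {k : Type*} [NormedField k] [IsUltrametricDist k] {p : ℕ}
  {g : unitBallSubring k →+ unitBallSubring k}

theorem mem_unitBallSubring {x : k} : x ∈ unitBallSubring k ↔ ‖x‖ ≤ 1 := Iff.rfl

theorem exists_pow_mul_mem_unitBallSubring (hp : p ≠ 0) (a : k) :
    ∃ c x : unitBallSubring k, c ≠ 0 ∧ (x : k) = c ^ p * a := by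
  by_cases ha : ‖a‖ ≤ 1
  · exact ⟨1, ⟨a, ha⟩, one_ne_zero, by simp⟩
  have ha0 : a ≠ 0 := by rintro rfl; simp at ha
  have hinv : a⁻¹ ∈ unitBallSubring k := by
    rw [mem_unitBallSubring, norm_inv]; exact inv_le_one_of_one_le₀ (not_le.1 ha).le
  obtain ⟨n, rfl⟩ := Nat.exists_eq_succ_of_ne_zero hp
  refine ⟨⟨a⁻¹, hinv⟩, ⟨a⁻¹, hinv⟩ ^ n, by simpa [Subtype.ext_iff] using ha0, ?_⟩
  simp [pow_succ, mul_assoc, inv_mul_cancel₀ ha0]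

/-- `a ↦ c⁻¹ g(c ^ p a)` for a chosen nonzero `c ∈ k°` with `c ^ p a ∈ k°`; by
`extendUnitBall_eq`, any such `c` gives the same value when `g` is `p⁻¹`-linear. -/
noncomputable def extendUnitBall (hp : p ≠ 0) (g : unitBallSubring k →+ unitBallSubring k)
    (a : k) : k :=
  ((exists_pow_mul_mem_unitBallSubring hp a).choose : k)⁻¹ *
    g (exists_pow_mul_mem_unitBallSubring hp a).choose_spec.choose

variable (hg : ∀ r x : unitBallSubring k, g (r ^ p * x) = r * g x)
include hg

theorem inv_mul_apply_eq_of_pow_mul_eq {a : k} {c d x y : unitBallSubring k} (hc : c ≠ 0)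
    (hd : d ≠ 0) (hx : (x : k) = c ^ p * a) (hy : (y : k) = d ^ p * a) :
    (c : k)⁻¹ * g x = (d : k)⁻¹ * g y := by
  have hxy : d ^ p * x = c ^ p * y := by
    ext; push_cast; rw [hx, hy]; ring
  have key : (d : k) * g x = c * g y := by
    simpa using congr_arg Subtype.val ((hg d x).symm.trans ((congr_arg g hxy).trans (hg c y)))
  have hc' : (c : k) ≠ 0 := fun h => hc (ZeroMemClass.coe_eq_zero.1 h)
  have hd' : (d : k) ≠ 0 := fun h => hd (ZeroMemClass.coe_eq_zero.1 h)
  field_simp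
  linear_combination key

theorem extendUnitBall_eq (hp : p ≠ 0) {a : k} {c x : unitBallSubring k} (hc : c ≠ 0)
    (hx : (x : k) = c ^ p * a) : extendUnitBall hp g a = (c : k)⁻¹ * g x := by
  obtain ⟨hc', hx'⟩ := (exists_pow_mul_mem_unitBallSubring hp a).choose_spec.choose_spec
  exact inv_mul_apply_eq_of_pow_mul_eq hg hc' hc hx' hx

theorem extendUnitBall_coe (hp : p ≠ 0) (x : unitBallSubring k) :
    extendUnitBall hp g x = g x := by
  simpa using extendUnitBall_eq hg hp one_ne_zero (x := x) (by simp)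

theorem extendUnitBall_add (hp : p ≠ 0) (a b : k) :
    extendUnitBall hp g (a + b) = extendUnitBall hp g a + extendUnitBall hp g b := by
  obtain ⟨c, x, hc, hx⟩ := exists_pow_mul_mem_unitBallSubring hp a
  obtain ⟨d, y, hd, hy⟩ := exists_pow_mul_mem_unitBallSubring hp b
  have hcd : c * d ≠ 0 := mul_ne_zero hc hd
  rw [extendUnitBall_eq hg hp hcd (x := d ^ p * x + c ^ p * y) (by push_cast; rw [hx, hy]; ring),
    extendUnitBall_eq hg hp hcd (x := d ^ p * x) (by push_cast; rw [hx]; ring),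
    extendUnitBall_eq hg hp hcd (x := c ^ p * y) (by push_cast; rw [hy]; ring), map_add]
  push_cast
  ring

theorem extendUnitBall_pow_mul_of_mem (hp : p ≠ 0) {c : k} (hc : c ∈ unitBallSubring k)
    (a : k) : extendUnitBall hp g (c ^ p * a) = c * extendUnitBall hp g a := by
  obtain ⟨d, x, hd, hx⟩ := exists_pow_mul_mem_unitBallSubring hp a
  rw [extendUnitBall_eq hg hp hd hx,
    extendUnitBall_eq hg hp hd (x := ⟨c, hc⟩ ^ p * x) (by push_cast; rw [hx]; ring), hg]
  push_cast
  ring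

theorem extendUnitBall_pow_mul (hp : p ≠ 0) (c a : k) :
    extendUnitBall hp g (c ^ p * a) = c * extendUnitBall hp g a := by
  rcases le_or_gt ‖c‖ 1 with hc | hc
  · exact extendUnitBall_pow_mul_of_mem hg hp hc a
  have hc0 : c ≠ 0 := by rintro rfl; norm_num at hc
  have hinv : c⁻¹ ∈ unitBallSubring k := by
    rw [mem_unitBallSubring, norm_inv]; exact inv_le_one_of_one_le₀ hc.le
  have h := extendUnitBall_pow_mul_of_mem hg hp hinv (c ^ p * a)
  rw [← mul_assoc, ← mul_pow, inv_mul_cancel₀ hc0, one_pow, one_mul] at h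
  rw [h, mul_inv_cancel_left₀ hc0]

theorem norm_extendUnitBall_le_one (hp : p ≠ 0) {a : k} (ha : ‖a‖ ≤ 1) :
    ‖extendUnitBall hp g a‖ ≤ 1 := by
  rw [show a = (⟨a, ha⟩ : unitBallSubring k) from rfl, extendUnitBall_coe hg hp]
  exact (g ⟨a, ha⟩).2

end Extension

theorem valuationRing_no_pInvLinear_general {k K : Type*}
    [NontriviallyNormedField k] [IsUltrametricDist k]
    (p : ℕ) [Fact p.Prime] [CharP k p]
    [NormedField K]
    (ι : k →+* K) (hisom : ∀ x : k, ‖ι x‖ = ‖x‖)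
    (hpow : ∀ y : K, ∃ x : k, y ^ p = ι x)
    (hroot : ∀ x : k, ∃ y : K, y ^ p = ι x)
    (hnofunc : ∀ f : K → k, (∀ a b : K, f (a + b) = f a + f b) →
      (∀ (c : k) (y : K), f (ι c * y) = c * f y) → Continuous f → f = 0) :
    ∀ g : unitBallSubring k →+ unitBallSubring k,
      (∀ r x : unitBallSubring k, g (r ^ p * x) = r * g x) → g = 0 := by
  intro g hg
  have hp : p ≠ 0 := (Fact.out : p.Prime).ne_zero
  have : CharP K p := charP_of_injective_ringHom ι.injective p
  choose φ hφ using hpow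
  have hFrob : IsFrobeniusFactor ι p φ := fun y => (hφ y).symm
  let G := extendUnitBall hp g
  have hadd (a b : K) : G (φ (a + b)) = G (φ a) + G (φ b) := by
    rw [hFrob.map_add]; exact extendUnitBall_add hg hp _ _
  have hmul (c : k) (y : K) : G (φ (ι c * y)) = c * G (φ y) := by
    rw [hFrob.map_mul]; exact extendUnitBall_pow_mul hg hp _ _
  have hball (y : K) (hy : ‖y‖ ≤ 1) : ‖G (φ y)‖ ≤ 1 :=
    norm_extendUnitBall_le_one hg hp <| by
      rw [hFrob.norm_eq hisom]; exact pow_le_one₀ (norm_nonneg y) hy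
  have hzero := hnofunc (G ∘ φ) hadd hmul
    (continuous_of_map_mul_of_norm_le_one ι hisom hadd hmul hball)
  ext x
  obtain ⟨y, hy⟩ := hroot x
  simpa [hFrob.apply_eq_of_pow_eq hy, G, extendUnitBall_coe hg] using congr_fun hzero y

/-- If a complete non-Archimedean field `k` of characteristic `p` has no nonzero
continuous `k`-linear functionals `k^{1/p} → k`, then its valuation ring `k°`
admits no nonzero `p⁻¹`-linear maps. -/
theorem valuationRing_no_pInvLinear {k K : Type*}
    [NontriviallyNormedField k] [CompleteSpace k] [IsUltrametricDist k]
    (p : ℕ) [Fact p.Prime] [CharP k p]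
    [NormedField K] [IsUltrametricDist K]
    (ι : k →+* K) (hisom : ∀ x : k, ‖ι x‖ = ‖x‖)
    (hpow : ∀ y : K, ∃ x : k, y ^ p = ι x)
    (hroot : ∀ x : k, ∃ y : K, y ^ p = ι x)
    (hnofunc : ∀ f : K → k, (∀ a b : K, f (a + b) = f a + f b) →
      (∀ (c : k) (y : K), f (ι c * y) = c * f y) → Continuous f → f = 0) :
    ∀ g : unitBallSubring k →+ unitBallSubring k,
      (∀ r x : unitBallSubring k, g (r ^ p * x) = r * g x) → g = 0 :=
  valuationRing_no_pInvLinear_general p ι hisom hpow hroot hnofunc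
end
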